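/- Let L be an orthomodular lattice, θ a lattice congruence on L also compatible with the orthocomplementation, I = [0]θ the congruence class of 0, and a ∈ L. Then the congruence class of a satisfies [a]θ = {i +_l a : i ∈ I} and I = {x +_l a : x ∈ [a]θ}, where u +_l v := (u ∨ (u' ∧ v)) ∧ (u' ∨ v'). In particular, the map i ↦ i +_l a is a bijection from [0]θ onto [a]θ, so all congruence classes of θ have the same cardinality. -/

import Mathlib

/-- An orthomodular lattice: a bounded lattice with an orthocomplementation
satisfying the orthomodular law. -/
class OML (α : Type*) extends Lattice α, BoundedOrder α, Compl α where
  inf_compl : ∀ x : α, x ⊓ xᶜ = ⊥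
  sup_compl : ∀ x : α, x ⊔ xᶜ = ⊤
  compl_compl : ∀ x : α, xᶜᶜ = x
  compl_antitone : ∀ x y : α, x ≤ y → yᶜ ≤ xᶜ
  orthomodular : ∀ x y : α, x ≤ y → y = x ⊔ (y ⊓ xᶜ)

def pl {α : Type*} [OML α] (x y : α) : α := (x ⊔ (xᶜ ⊓ y)) ⊓ (xᶜ ⊔ yᶜ)

/-- A congruence on an OML: an equivalence relation compatible with `⊔`, `⊓`
and the orthocomplementation. -/
structure IsOMLCongruence {α : Type*} [OML α] (r : α → α → Prop) : Prop where
  equiv : Equivalence r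
  sup_compat : ∀ {a b c d : α}, r a b → r c d → r (a ⊔ c) (b ⊔ d)
  inf_compat : ∀ {a b c d : α}, r a b → r c d → r (a ⊓ c) (b ⊓ d)
  compl_compat : ∀ {a b : α}, r a b → r aᶜ bᶜ

section OMLFacts

variable {α : Type*} [OML α]

private lemma cc (x : α) : xᶜᶜ = x := OML.compl_compl x

private lemma anti {x y : α} (h : x ≤ y) : yᶜ ≤ xᶜ := OML.compl_antitone x y h

private lemma le_compl_comm' {a b : α} (h : a ≤ bᶜ) : b ≤ aᶜ := by
  have := anti h; rwa [cc] at this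

private lemma compl_sup' (x y : α) : (x ⊔ y)ᶜ = xᶜ ⊓ yᶜ := by
  apply le_antisymm
  · exact le_inf (anti le_sup_left) (anti le_sup_right)
  · have h1 : x ⊔ y ≤ (xᶜ ⊓ yᶜ)ᶜ :=
      sup_le (le_compl_comm' inf_le_left) (le_compl_comm' inf_le_right)
    have := anti h1; rwa [cc] at this

private lemma compl_inf' (x y : α) : (x ⊓ y)ᶜ = xᶜ ⊔ yᶜ := by
  have h := compl_sup' xᶜ yᶜ
  rw [cc, cc] at h
  rw [← h, cc]

private lemma compl_bot' : (⊥ : α)ᶜ = ⊤ := by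
  have := OML.sup_compl (⊥ : α); rwa [bot_sup_eq] at this

private lemma sandwich {s w : α} (h1 : s ≤ w) (h2 : w ⊓ sᶜ ≤ ⊥) : w = s := by
  have h := OML.orthomodular s w h1
  rw [le_bot_iff.mp h2, sup_bot_eq] at h
  exact h

private lemma O1 {u v : α} (h : u ≤ vᶜ) : (u ⊔ v) ⊓ vᶜ = u := by
  apply sandwich (le_inf le_sup_left h)
  have heq : (u ⊔ v) ⊓ vᶜ ⊓ uᶜ = (u ⊔ v) ⊓ (u ⊔ v)ᶜ := by
    rw [compl_sup']
    ac_rfl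
  rw [heq, OML.inf_compl]

private lemma pl_eq (x y : α) : pl x y = (x ⊓ (xᶜ ⊔ yᶜ)) ⊔ (xᶜ ⊓ y) := by
  unfold pl
  set e := xᶜ ⊓ y with he
  set f := x ⊓ (xᶜ ⊔ yᶜ) with hf
  have hex : e ≤ xᶜ := inf_le_left
  have hxe : x ≤ eᶜ := le_compl_comm' hex
  apply sandwich
  · exact sup_le (le_inf (inf_le_left.trans le_sup_left) inf_le_right)
      (le_inf le_sup_right (hex.trans le_sup_left))
  · have heq : (x ⊔ e) ⊓ (xᶜ ⊔ yᶜ) ⊓ (f ⊔ e)ᶜ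
        = ((x ⊔ e) ⊓ eᶜ) ⊓ ((xᶜ ⊔ yᶜ) ⊓ fᶜ) := by
      rw [compl_sup']
      ac_rfl
    rw [heq, O1 hxe]
    have heq2 : x ⊓ ((xᶜ ⊔ yᶜ) ⊓ fᶜ) = f ⊓ fᶜ := by rw [hf]; ac_rfl
    rw [heq2, OML.inf_compl]

private lemma pl_pl (x y : α) : pl (pl x y) y = x := by
  set g := x ⊓ y with hg
  set e := xᶜ ⊓ y with he
  set f := x ⊓ (xᶜ ⊔ yᶜ) with hf
  have hex : e ≤ xᶜ := inf_le_left
  have hey : e ≤ y := inf_le_right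
  have hfx : f ≤ x := inf_le_left
  have hgx : g ≤ x := inf_le_left
  have hgy : g ≤ y := inf_le_right
  have hxe : x ≤ eᶜ := le_compl_comm' hex
  have hfe : f ≤ eᶜ := hfx.trans hxe
  have hge : g ≤ eᶜ := hgx.trans hxe
  have hfc : fᶜ = xᶜ ⊔ g := by
    rw [hf, compl_inf', ← compl_inf' x y, cc, ← hg]
  have hp : pl x y = f ⊔ e := pl_eq x y
  -- (f ⊔ e) ⊓ y = e
  have step2 : (f ⊔ e) ⊓ y = e := by
    apply sandwich (le_inf le_sup_right hey)
    have heq : (f ⊔ e) ⊓ y ⊓ eᶜ = ((f ⊔ e) ⊓ eᶜ) ⊓ y := by ac_rfl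
    rw [heq, O1 hfe]
    have heq2 : f ⊓ y = (x ⊓ y) ⊓ (x ⊓ y)ᶜ := by rw [hf, compl_inf']; ac_rfl
    rw [heq2, OML.inf_compl]
  -- (f ⊔ e) ⊓ eᶜ = f
  have step3 : (f ⊔ e) ⊓ eᶜ = f := O1 hfe
  -- (f ⊔ e)ᶜ ⊓ y = g
  have step4 : (f ⊔ e)ᶜ ⊓ y = g := by
    rw [compl_sup']
    apply sandwich (le_inf (le_inf (hfc ▸ le_sup_right) hge) hgy)
    have heq : fᶜ ⊓ eᶜ ⊓ y ⊓ gᶜ = (fᶜ ⊓ gᶜ) ⊓ (eᶜ ⊓ y) := by ac_rfl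
    have hxg : xᶜ ≤ gᶜ := anti hgx
    rw [heq, hfc, O1 hxg]
    have heq2 : xᶜ ⊓ (eᶜ ⊓ y) = e ⊓ eᶜ := by rw [he]; ac_rfl
    rw [heq2, OML.inf_compl]
  -- x = f ⊔ g
  have hx : f ⊔ g = x := by
    symm
    apply sandwich (sup_le hfx hgx)
    have heq : x ⊓ (f ⊔ g)ᶜ = ((xᶜ ⊔ g) ⊓ gᶜ) ⊓ x := by
      rw [compl_sup', hfc]; ac_rfl
    have hxg : xᶜ ≤ gᶜ := anti hgx
    rw [heq, O1 hxg]
    have : xᶜ ⊓ x = x ⊓ xᶜ := inf_comm _ _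
    rw [this, OML.inf_compl]
  rw [hp, pl_eq, ← compl_inf' (f ⊔ e) y, step2, step3, step4, hx]

private lemma pl_bot (y : α) : pl ⊥ y = y := by
  unfold pl
  rw [compl_bot', top_inf_eq, bot_sup_eq, top_sup_eq, inf_top_eq]

private lemma pl_self (x : α) : pl x x = ⊥ := by
  unfold pl
  rw [sup_idem]
  have h1 : xᶜ ⊓ x = ⊥ := by rw [inf_comm, OML.inf_compl]
  rw [h1, sup_bot_eq, OML.inf_compl]

private lemma pl_compat {r : α → α → Prop} (hr : IsOMLCongruence r)
    {u v w z : α} (h1 : r u v) (h2 : r w z) : r (pl u w) (pl v z) :=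
  hr.inf_compat (hr.sup_compat h1 (hr.inf_compat (hr.compl_compat h1) h2))
    (hr.sup_compat (hr.compl_compat h1) (hr.compl_compat h2))

private lemma bij_lemma (r : α → α → Prop) (hr : IsOMLCongruence r) (a : α) :
    Set.BijOn (fun i => pl i a) {i : α | r i ⊥} {x : α | r x a} := by
  have h1 : ∀ i : α, r i ⊥ → r (pl i a) a := fun i h => by
    have := pl_compat hr h (hr.equiv.refl a); rwa [pl_bot] at this
  have h2 : ∀ x : α, r x a → r (pl x a) ⊥ := fun x h => by
    have := pl_compat hr h (hr.equiv.refl a); rwa [pl_self] at this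
  refine ⟨fun i hi => h1 i hi, fun i _ j _ hij => ?_, fun x hx => ?_⟩
  · have : pl (pl i a) a = pl (pl j a) a := by
      simpa using congrArg (fun t => pl t a) hij
    rwa [pl_pl, pl_pl] at this
  · exact ⟨pl x a, h2 x hx, pl_pl x a⟩

end OMLFacts

theorem stmt_19 {α : Type*} [OML α] (r : α → α → Prop)
    (hr : IsOMLCongruence r) (a : α) :
    {x : α | r x a} = (fun i => pl i a) '' {i : α | r i ⊥} ∧
    {i : α | r i ⊥} = (fun x => pl x a) '' {x : α | r x a} ∧
    Set.BijOn (fun i => pl i a) {i : α | r i ⊥} {x : α | r x a} ∧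
    ∀ b c : α, Cardinal.mk {x : α | r x b} = Cardinal.mk {x : α | r x c} := by
  have h1 : ∀ i : α, r i ⊥ → r (pl i a) a := fun i h => by
    have := pl_compat hr h (hr.equiv.refl a); rwa [pl_bot] at this
  have h2 : ∀ x : α, r x a → r (pl x a) ⊥ := fun x h => by
    have := pl_compat hr h (hr.equiv.refl a); rwa [pl_self] at this
  refine ⟨?_, ?_, bij_lemma r hr a, ?_⟩
  · ext x
    constructor
    · intro hx; exact ⟨pl x a, h2 x hx, pl_pl x a⟩
    · rintro ⟨i, hi, rfl⟩; exact h1 i hi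
  · ext i
    constructor
    · intro hi; exact ⟨pl i a, h1 i hi, pl_pl i a⟩
    · rintro ⟨x, hx, rfl⟩; exact h2 x hx
  · intro b c
    calc Cardinal.mk {x : α | r x b}
        = Cardinal.mk {i : α | r i ⊥} :=
          (Cardinal.mk_congr (Set.BijOn.equiv _ (bij_lemma r hr b))).symm
      _ = Cardinal.mk {x : α | r x c} :=
          Cardinal.mk_congr (Set.BijOn.equiv _ (bij_lemma r hr c))
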